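/- Characterization of the ogre's interpretation: α ∈ ⟦Y*⟧ (i.e., ⊢ Y* : α is derivable) if and only if α = ⊗ᵢ₌₀ⁿ(1 ⊸ αᵢ) for some n ≥ 0 with each αᵢ ∈ ⟦Y*⟧ (where the empty tensor is 1). -/

import Mathlib

-- Computational and parallel types
mutual
  inductive CTy : Type
    | one : CTy
    | tens : CTy → CTy → CTy
    | arr : CTy → PTy → CTy
  inductive PTy : Type
    | ofC : CTy → PTy
    | par : PTy → PTy → PTy
end

-- Type equivalence: AC of ⊗ and ⅋, 1 neutral for ⊗
mutual
  inductive CEq : CTy → CTy → Prop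
    | refl (τ) : CEq τ τ
    | symm : CEq τ ρ → CEq ρ τ
    | trans : CEq τ ρ → CEq ρ σ → CEq τ σ
    | comm (τ ρ) : CEq (.tens τ ρ) (.tens ρ τ)
    | assoc (τ ρ σ) : CEq (.tens (.tens τ ρ) σ) (.tens τ (.tens ρ σ))
    | unit (τ) : CEq (.tens τ .one) τ
    | tensCongr : CEq τ τ' → CEq ρ ρ' → CEq (.tens τ ρ) (.tens τ' ρ')
    | arrCongr : CEq τ τ' → PEq α α' → CEq (.arr τ α) (.arr τ' α')
  inductive PEq : PTy → PTy → Prop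
    | refl (α) : PEq α α
    | symm : PEq α β → PEq β α
    | trans : PEq α β → PEq β γ → PEq α γ
    | comm (α β) : PEq (.par α β) (.par β α)
    | assoc (α β γ) : PEq (.par (.par α β) γ) (.par α (.par β γ))
    | parCongr : PEq α α' → PEq β β' → PEq (.par α β) (.par α' β')
    | ofC : CEq τ τ' → PEq (.ofC τ) (.ofC τ')
end

def Ctx : Type := ℕ → CTy
def Ctx.empty : Ctx := fun _ => CTy.one
def Ctx.tens (Γ Δ : Ctx) : Ctx := fun n => CTy.tens (Γ n) (Δ n)
def Ctx.single (x : ℕ) (τ : CTy) : Ctx := fun n => if n = x then τ else CTy.one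
def Ctx.cons (τ : CTy) (Γ : Ctx) : Ctx := fun n =>
  match n with
  | 0 => τ
  | n+1 => Γ n
def CtxEq (Γ Δ : Ctx) : Prop := ∀ n, CEq (Γ n) (Δ n)

def tensList (l : List CTy) : CTy := l.foldr CTy.tens CTy.one
def tensFin (n : ℕ) (f : Fin n → CTy) : CTy := tensList (List.ofFn f)
def tensCtxFin (n : ℕ) (Δ : Fin n → Ctx) : Ctx := fun x => tensFin n (fun i => Δ i x)

def parList : List PTy → PTy
  | [] => PTy.ofC CTy.one
  | [α] => α
  | α :: β :: rest => PTy.par α (parList (β :: rest))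

def parFin (n : ℕ) (f : Fin n → PTy) : PTy := parList (List.ofFn f)

/-- ⅋ᵏ1 : the par of k copies of 1 (left associated); junk value at 0. -/
def parOnes : ℕ → PTy
  | 0 => PTy.ofC CTy.one
  | 1 => PTy.ofC CTy.one
  | n+2 => PTy.par (parOnes (n+1)) (PTy.ofC CTy.one)

/-- Terms of Λ₊∥ in de Bruijn notation. -/
inductive Tm : Type
  | var : ℕ → Tm
  | lam : Tm → Tm
  | app : Tm → Tm → Tm
  | plus : Tm → Tm → Tm
  | par : Tm → Tm → Tm

def IsValue : Tm → Prop
  | .var _ => True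
  | .lam _ => True
  | _ => False

def IsPar : Tm → Prop
  | .par _ _ => True
  | _ => False

def shiftTm (c : ℕ) : Tm → Tm
  | .var n => if n < c then .var n else .var (n+1)
  | .lam M => .lam (shiftTm (c+1) M)
  | .app M N => .app (shiftTm c M) (shiftTm c N)
  | .plus M N => .plus (shiftTm c M) (shiftTm c N)
  | .par M N => .par (shiftTm c M) (shiftTm c N)

/-- Capture-avoiding substitution `M[V/k]` (de Bruijn). -/
def substTm : Tm → ℕ → Tm → Tm
  | .var n, k, V => if n = k then V else if k < n then .var (n-1) else .var n
  | .lam M, k, V => .lam (substTm M (k+1) (shiftTm 0 V))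
  | .app M N, k, V => .app (substTm M k V) (substTm N k V)
  | .plus M N, k, V => .plus (substTm M k V) (substTm N k V)
  | .par M N, k, V => .par (substTm M k V) (substTm N k V)

def closedUnder : ℕ → Tm → Prop
  | d, .var n => n < d
  | d, .lam M => closedUnder (d+1) M
  | d, .app M N => closedUnder d M ∧ closedUnder d N
  | d, .plus M N => closedUnder d M ∧ closedUnder d N
  | d, .par M N => closedUnder d M ∧ closedUnder d N

def Closed (M : Tm) : Prop := closedUnder 0 M

/-- One-step reduction; the boolean flag records whether a +-reduction is used. -/
inductive Step : Bool → Tm → Tm → Prop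
  | beta {M V} : IsValue V → Step false (.app (.lam M) V) (substTm M 0 V)
  | plusL (M N) : Step true (.plus M N) M
  | plusR (M N) : Step true (.plus M N) N
  | parAppL (M N P) : Step false (.app (.par M N) P) (.par (.app M P) (.app N P))
  | parAppR {V} (M N) : IsValue V → Step false (.app V (.par M N)) (.par (.app V M) (.app V N))
  | parL {b M M'} (N) : Step b M M' → Step b (.par M N) (.par M' N)
  | parR {b N N'} (M) : Step b N N' → Step b (.par M N) (.par M N')
  | appL {b M M'} (N) : Step b M M' → ¬ IsPar M → Step b (.app M N) (.app M' N)
  | appR {b M M' V} : IsValue V → Step b M M' → ¬ IsPar M → Step b (.app V M) (.app V M')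

/-- The two contracta of a single +-redex, reduced in context. -/
inductive PlusPair : Tm → Tm → Tm → Prop
  | base (M N) : PlusPair (.plus M N) M N
  | parL {M M₁ M₂} (N) : PlusPair M M₁ M₂ → PlusPair (.par M N) (.par M₁ N) (.par M₂ N)
  | parR {N N₁ N₂} (M) : PlusPair N N₁ N₂ → PlusPair (.par M N) (.par M N₁) (.par M N₂)
  | appL {M M₁ M₂} (N) : PlusPair M M₁ M₂ → ¬ IsPar M → PlusPair (.app M N) (.app M₁ N) (.app M₂ N)
  | appR {M M₁ M₂ V} : IsValue V → PlusPair M M₁ M₂ → ¬ IsPar M → PlusPair (.app V M) (.app V M₁) (.app V M₂)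

/-- n-step reduction. -/
inductive Steps : ℕ → Tm → Tm → Prop
  | refl (M) : Steps 0 M M
  | head {b M N P n} : Step b M N → Steps n N P → Steps (n+1) M P

/-- A closed term converges iff it reduces to a parallel composition of values. -/
def Converges (M : Tm) : Prop :=
  ∃ (n : ℕ) (V : Tm) (Vs : List Tm), IsValue V ∧ (∀ W ∈ Vs, IsValue W) ∧
    Steps n M (Vs.foldl Tm.par V)

/-- Typing derivations, indexed by the measure |π|. -/
inductive Deriv : Ctx → Tm → PTy → ℕ → Prop
  | ax (x : ℕ) (τ : CTy) : Deriv (Ctx.single x τ) (.var x) (.ofC τ) 0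
  | lamI (n : ℕ) (Δ : Fin n → Ctx) (τ : Fin n → CTy) (α : Fin n → PTy) (ms : Fin n → ℕ)
      (M : Tm) :
      (∀ i, Deriv (Ctx.cons (τ i) (Δ i)) M (α i) (ms i)) →
      Deriv (tensCtxFin n Δ) (.lam M)
        (.ofC (tensFin n (fun i => .arr (τ i) (α i)))) (∑ i, ms i)
  | appE (k : ℕ) (hk : 0 < k) (nf : Fin k → ℕ) (hn : ∀ i, 0 < nf i)
      (τ : ∀ i : Fin k, Fin (nf i) → CTy) (α : ∀ i : Fin k, Fin (nf i) → PTy)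
      (Δ : Ctx) (Γ : Fin k → Ctx) (m0 : ℕ) (ms : Fin k → ℕ) (M N : Tm) :
      Deriv Δ M (parFin k (fun i => .ofC (tensFin (nf i) (fun j => .arr (τ i j) (α i j))))) m0 →
      (∀ i, Deriv (Γ i) N (parFin (nf i) (fun j => .ofC (τ i j))) (ms i)) →
      Deriv (Ctx.tens Δ (tensCtxFin k Γ)) (.app M N)
        (parFin k (fun i => parFin (nf i) (α i)))
        ((m0 + (∑ i, ms i) + (∑ i, 2 * nf i)) - 1)
  | plusL {Δ M α m} (N) : Deriv Δ M α m → Deriv Δ (.plus M N) α (m+1)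
  | plusR {Δ N α m} (M) : Deriv Δ N α m → Deriv Δ (.plus M N) α (m+1)
  | parI {Δ Γ M N α β m m'} : Deriv Δ M α m → Deriv Γ N β m' →
      Deriv (Ctx.tens Δ Γ) (.par M N) (.par α β) (m + m')
  | eqv {Γ Γ' M α α' m} : Deriv Γ M α m → CtxEq Γ Γ' → PEq α α' → Deriv Γ' M α' m

def deltaTm : Tm := .lam (.app (.var 0) (.var 0))
def OmegaTm : Tm := .app deltaTm deltaTm
def Idt : Tm := .lam (.var 0)
def dstarTm : Tm := .lam (.lam (.app (.var 1) (.var 1)))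
def YstarTm : Tm := .app dstarTm dstarTm

/-!
A type of a closed abstraction `λx.M` is, up to `≡`, a tensor of arrows `τᵢ ⊸ αᵢ` with
`x : τᵢ ⊢ M : αᵢ` for each `i`; so the types of a closed abstraction are exactly the tensors
of such arrows, and they are closed under `⊗` and under taking tensor factors. Values only have
computational types, so an application of two values is typed by `⊸E` with a single arrow
and a single argument type. For `Y* = Δ* Δ*` with `Δ* = λx.λy.xx` this gives `⊢ Y* : α` iff
`⊢ Δ* : δ ⊸ α` and `⊢ Δ* : δ` for some `δ`. The body `λy.xx` has type `γ` under `x : δ` iff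
`γ ≡ ⊗ᵢ (1 ⊸ βᵢ)` and `δ ≡ ⊗ᵢ ((δᵢ ⊸ βᵢ) ⊗ δᵢ)`, and by splitting `⊢ Δ* : δ` then means
`⊢ Δ* : δᵢ ⊸ βᵢ` and `⊢ Δ* : δᵢ`, that is `⊢ Y* : βᵢ`, for every `i`.
-/

def CTy.arrows : CTy → List (CTy × PTy)
  | .one => []
  | .tens τ ρ => τ.arrows ++ ρ.arrows
  | .arr τ α => [(τ, α)]

def PTy.comps : PTy → List CTy
  | .ofC τ => [τ]
  | .par α β => α.comps ++ β.comps

def ArrowEquiv (p q : CTy × PTy) : Prop := CEq p.1 q.1 ∧ PEq p.2 q.2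

theorem ArrowEquiv.refl (p : CTy × PTy) : ArrowEquiv p p := ⟨.refl _, .refl _⟩

instance : IsTrans (CTy × PTy) ArrowEquiv :=
  ⟨fun _ _ _ h h' => ⟨h.1.trans h'.1, h.2.trans h'.2⟩⟩
instance : IsTrans CTy CEq := ⟨fun _ _ _ => CEq.trans⟩

theorem Multiset.Rel.symm {α : Type*} {r : α → α → Prop} {s t : Multiset α}
    (h : Multiset.Rel r s t) (hr : ∀ {a b}, r a b → r b a) : Multiset.Rel r t s :=
  Multiset.rel_flip.1 (h.mono fun _ _ _ _ => hr)

mutual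

theorem CEq.rel_arrows {τ ρ : CTy} :
    CEq τ ρ → Multiset.Rel ArrowEquiv (τ.arrows : Multiset _) ρ.arrows
  | .refl _ => Multiset.rel_refl_of_refl_on fun p _ => .refl p
  | .symm h => h.rel_arrows.symm fun h => ⟨h.1.symm, h.2.symm⟩
  | .trans h h' => h.rel_arrows.trans _ h'.rel_arrows
  | .comm τ ρ => by
      rw [CTy.arrows, CTy.arrows, ← Multiset.coe_add, ← Multiset.coe_add, add_comm]
      exact Multiset.rel_refl_of_refl_on fun p _ => .refl p
  | .assoc τ ρ σ => by
      simp only [CTy.arrows, List.append_assoc]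
      exact Multiset.rel_refl_of_refl_on fun p _ => .refl p
  | .unit τ => by
      simp only [CTy.arrows, List.append_nil]
      exact Multiset.rel_refl_of_refl_on fun p _ => .refl p
  | .tensCongr h h' => by
      simp only [CTy.arrows, ← Multiset.coe_add]
      exact h.rel_arrows.add h'.rel_arrows
  | .arrCongr h h' => .cons ⟨h, h'⟩ .zero

theorem PEq.rel_comps {α β : PTy} :
    PEq α β → Multiset.Rel CEq (α.comps : Multiset _) β.comps
  | .refl _ => Multiset.rel_refl_of_refl_on fun _ _ => .refl _
  | .symm h => h.rel_comps.symm CEq.symm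
  | .trans h h' => h.rel_comps.trans _ h'.rel_comps
  | .comm α β => by
      rw [PTy.comps, PTy.comps, ← Multiset.coe_add, ← Multiset.coe_add, add_comm]
      exact Multiset.rel_refl_of_refl_on fun _ _ => .refl _
  | .assoc α β γ => by
      simp only [PTy.comps, List.append_assoc]
      exact Multiset.rel_refl_of_refl_on fun _ _ => .refl _
  | .parCongr h h' => by
      simp only [PTy.comps, ← Multiset.coe_add]
      exact h.rel_comps.add h'.rel_comps
  | .ofC h => .cons h .zero

end

theorem PEq.ceq_of_ofC {τ ρ : CTy} (h : PEq (.ofC τ) (.ofC ρ)) : CEq τ ρ := by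
  obtain ⟨_, hmem, h⟩ :=
    Multiset.exists_mem_of_rel_of_mem h.rel_comps (a := τ) (by simp [PTy.comps])
  simp only [PTy.comps, Multiset.mem_coe, List.mem_singleton] at hmem
  exact hmem ▸ h

theorem CTy.ceq_one_of_arrows_eq_nil : ∀ {τ : CTy}, τ.arrows = [] → CEq τ .one
  | .one, _ => .refl _
  | .tens _ _, h => by
      rw [CTy.arrows, List.append_eq_nil_iff] at h
      exact ((ceq_one_of_arrows_eq_nil h.1).tensCongr (ceq_one_of_arrows_eq_nil h.2)).trans
        (.unit _)
  | .arr _ _, h => by simp [CTy.arrows] at h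

theorem CTy.ceq_one_iff {τ : CTy} : CEq τ .one ↔ τ.arrows = [] :=
  ⟨fun h => by simpa [CTy.arrows] using Multiset.card_eq_card_of_rel h.rel_arrows,
    ceq_one_of_arrows_eq_nil⟩

theorem arrows_tensList (L : List CTy) : (tensList L).arrows = L.flatMap CTy.arrows := by
  induction L with
  | nil => rfl
  | cons τ L ih => simp [tensList, CTy.arrows, ← ih]

theorem mem_arrows_tensFin_arr {n : ℕ} {τs : Fin n → CTy} {αs : Fin n → PTy} {p : CTy × PTy} :
    p ∈ (tensFin n fun i => .arr (τs i) (αs i)).arrows ↔ ∃ i, (τs i, αs i) = p := by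
  simp [tensFin, arrows_tensList, CTy.arrows, eq_comm]

theorem tensFin_ceq_one_iff {n : ℕ} {f : Fin n → CTy} :
    CEq (tensFin n f) .one ↔ ∀ i, CEq (f i) .one := by
  simp [tensFin, CTy.ceq_one_iff, arrows_tensList]

theorem ceq_tensList_append (L L' : List CTy) :
    CEq (tensList (L ++ L')) (.tens (tensList L) (tensList L')) := by
  induction L with
  | nil => exact (CEq.unit _).symm.trans (.comm _ _)
  | cons τ L ih => exact ((CEq.refl τ).tensCongr ih).trans (CEq.assoc _ _ _).symm

theorem CTy.ceq_tensList_arrows :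
    ∀ τ : CTy, CEq τ (tensList (τ.arrows.map fun p => .arr p.1 p.2))
  | .one => .refl _
  | .tens τ ρ => by
      rw [CTy.arrows, List.map_append]
      exact ((ceq_tensList_arrows τ).tensCongr (ceq_tensList_arrows ρ)).trans
        (ceq_tensList_append _ _).symm
  | .arr _ _ => (CEq.unit _).symm

theorem tensFin_congr {n : ℕ} {f g : Fin n → CTy} (h : ∀ i, CEq (f i) (g i)) :
    CEq (tensFin n f) (tensFin n g) := by
  induction n with
  | zero => exact .refl _
  | succ n ih =>
      simpa only [tensFin, tensList, List.ofFn_succ, List.foldr_cons] using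
        (h 0).tensCongr (ih fun i => h i.succ)

theorem comps_parList : ∀ {L : List PTy}, L ≠ [] → (parList L).comps = L.flatMap PTy.comps
  | [α], _ => by simp [parList]
  | α :: β :: L, _ => by simp [parList, PTy.comps, comps_parList (L := β :: L) (by simp)]

theorem eq_one_of_parFin_peq_ofC {k : ℕ} (hk : 0 < k) {c : Fin k → CTy} {τ : CTy}
    (h : PEq (parFin k fun i => .ofC (c i)) (.ofC τ)) : k = 1 := by
  have := Multiset.card_eq_card_of_rel h.rel_comps
  simp_all [parFin, comps_parList, PTy.comps, Nat.pos_iff_ne_zero, Function.comp_def]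

theorem CtxEq.refl (Γ : Ctx) : CtxEq Γ Γ := fun _ => .refl _

theorem CtxEq.symm {Γ Δ : Ctx} (h : CtxEq Γ Δ) : CtxEq Δ Γ := fun x => (h x).symm

theorem CtxEq.trans {Γ Δ Θ : Ctx} (h : CtxEq Γ Δ) (h' : CtxEq Δ Θ) : CtxEq Γ Θ :=
  fun x => (h x).trans (h' x)

theorem CtxEq.tens {Γ Γ' Δ Δ' : Ctx} (h : CtxEq Γ Γ') (h' : CtxEq Δ Δ') :
    CtxEq (Ctx.tens Γ Δ) (Ctx.tens Γ' Δ') := fun x => (h x).tensCongr (h' x)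

theorem CtxEq.cons {τ τ' : CTy} {Γ Γ' : Ctx} (hτ : CEq τ τ') (hΓ : CtxEq Γ Γ') :
    CtxEq (Ctx.cons τ Γ) (Ctx.cons τ' Γ')
  | 0 => hτ
  | x + 1 => hΓ x

theorem Ctx.tens_ctxEq_empty_iff {Γ Δ : Ctx} :
    CtxEq (Ctx.tens Γ Δ) Ctx.empty ↔ CtxEq Γ Ctx.empty ∧ CtxEq Δ Ctx.empty := by
  simp only [CtxEq, Ctx.tens, Ctx.empty, CTy.ceq_one_iff, CTy.arrows, List.append_eq_nil_iff,
    forall_and]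

theorem tensCtxFin_ctxEq_empty_iff {n : ℕ} {Δ : Fin n → Ctx} :
    CtxEq (tensCtxFin n Δ) Ctx.empty ↔ ∀ i, CtxEq (Δ i) Ctx.empty := by
  simp only [CtxEq, tensCtxFin, Ctx.empty, tensFin_ceq_one_iff]
  exact forall_comm

def Typable (Γ : Ctx) (M : Tm) (α : PTy) : Prop := ∃ m, Deriv Γ M α m

theorem Typable.eqv {Γ Γ' : Ctx} {M : Tm} {α α' : PTy} (h : Typable Γ M α) (hΓ : CtxEq Γ Γ')
    (hα : PEq α α') : Typable Γ' M α' :=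
  h.imp fun _ d => d.eqv hΓ hα

theorem Typable.lam {n : ℕ} {Δ : Fin n → Ctx} {τ : Fin n → CTy} {β : Fin n → PTy} {M : Tm}
    (h : ∀ i, Typable (Ctx.cons (τ i) (Δ i)) M (β i)) :
    Typable (tensCtxFin n Δ) (.lam M) (.ofC (tensFin n fun i => .arr (τ i) (β i))) := by
  choose ms hms using h
  exact ⟨_, Deriv.lamI n Δ τ β ms M hms⟩

theorem Typable.var_inv {Γ : Ctx} {x : ℕ} {α : PTy} (h : Typable Γ (.var x) α) :
    ∃ τ, PEq (.ofC τ) α ∧ CtxEq (Ctx.single x τ) Γ := by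
  obtain ⟨m, d⟩ := h
  generalize ht : Tm.var x = t at d
  induction d with
  | ax y τ => cases ht; exact ⟨τ, .refl _, .refl _⟩
  | eqv _ hΓ hα ih =>
      obtain ⟨τ, hτ, hctx⟩ := ih ht
      exact ⟨τ, hτ.trans hα, hctx.trans hΓ⟩
  | _ => cases ht

theorem Typable.lam_inv {Γ : Ctx} {M : Tm} {α : PTy} (h : Typable Γ (.lam M) α) :
    ∃ (n : ℕ) (Δ : Fin n → Ctx) (τ : Fin n → CTy) (β : Fin n → PTy),
      CtxEq (tensCtxFin n Δ) Γ ∧ PEq (.ofC (tensFin n fun i => .arr (τ i) (β i))) α ∧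
      ∀ i, Typable (Ctx.cons (τ i) (Δ i)) M (β i) := by
  obtain ⟨m, d⟩ := h
  generalize ht : Tm.lam M = t at d
  induction d with
  | lamI n Δ τ β ms _ hd =>
      cases ht; exact ⟨n, Δ, τ, β, .refl _, .refl _, fun i => ⟨ms i, hd i⟩⟩
  | eqv _ hΓ hα ih =>
      obtain ⟨n, Δ, τ, β, hctx, hty, hd⟩ := ih ht
      exact ⟨n, Δ, τ, β, hctx.trans hΓ, hty.trans hα, hd⟩
  | _ => cases ht

theorem Typable.app_inv {Γ : Ctx} {M N : Tm} {α : PTy} (h : Typable Γ (.app M N) α) :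
    ∃ (k : ℕ), 0 < k ∧ ∃ (nf : Fin k → ℕ), (∀ i, 0 < nf i) ∧
      ∃ (τ : ∀ i : Fin k, Fin (nf i) → CTy) (β : ∀ i : Fin k, Fin (nf i) → PTy)
        (Δ : Ctx) (Θ : Fin k → Ctx),
        CtxEq (Ctx.tens Δ (tensCtxFin k Θ)) Γ ∧ PEq (parFin k fun i => parFin (nf i) (β i)) α ∧
        Typable Δ M (parFin k fun i => .ofC (tensFin (nf i) fun j => .arr (τ i j) (β i j))) ∧
        ∀ i, Typable (Θ i) N (parFin (nf i) fun j => .ofC (τ i j)) := by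
  obtain ⟨m, d⟩ := h
  generalize ht : Tm.app M N = t at d
  induction d with
  | appE k hk nf hn τ β Δ Θ m0 ms _ _ hM hN =>
      cases ht
      exact ⟨k, hk, nf, hn, τ, β, Δ, Θ, .refl _, .refl _, ⟨m0, hM⟩, fun i => ⟨ms i, hN i⟩⟩
  | eqv _ hΓ hα ih =>
      obtain ⟨k, hk, nf, hn, τ, β, Δ, Θ, hctx, hty, hM, hN⟩ := ih ht
      exact ⟨k, hk, nf, hn, τ, β, Δ, Θ, hctx.trans hΓ, hty.trans hα, hM, hN⟩
  | _ => cases ht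

theorem Typable.exists_ofC_of_isValue {Γ : Ctx} {V : Tm} {α : PTy} (hV : IsValue V)
    (h : Typable Γ V α) : ∃ τ, PEq α (.ofC τ) := by
  cases V with
  | var x => obtain ⟨τ, hτ, -⟩ := h.var_inv; exact ⟨τ, hτ.symm⟩
  | lam M => obtain ⟨n, -, τ, β, -, hty, -⟩ := h.lam_inv; exact ⟨_, hty.symm⟩
  | _ => exact hV.elim

theorem parFin_of_eq_one {k : ℕ} (hk : k = 1) (f : Fin k → PTy) :
    parFin k f = f ⟨0, by omega⟩ := by
  subst hk; rfl

theorem tensFin_of_eq_one {k : ℕ} (hk : k = 1) (f : Fin k → CTy) :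
    tensFin k f = .tens (f ⟨0, by omega⟩) .one := by
  subst hk; rfl

theorem typable_app_iff_of_isValue {Γ : Ctx} {V W : Tm} {β : PTy} (hV : IsValue V)
    (hW : IsValue W) :
    Typable Γ (.app V W) β ↔ ∃ (Δ Θ : Ctx) (τ : CTy) (β' : PTy), PEq β' β ∧
      CtxEq (Ctx.tens Δ Θ) Γ ∧ Typable Δ V (.ofC (.arr τ β')) ∧ Typable Θ W (.ofC τ) := by
  constructor
  · intro h
    obtain ⟨k, hk, nf, hn, τ, β', Δ, Θ, hctx, hty, hV', hW'⟩ := h.app_inv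
    -- Values only have computational types, so both ⅋-sums of the `⊸E` rule are unary.
    obtain ⟨_, hfun⟩ := hV'.exists_ofC_of_isValue hV
    obtain rfl : k = 1 := eq_one_of_parFin_peq_ofC hk hfun
    obtain ⟨_, harg⟩ := (hW' 0).exists_ofC_of_isValue hW
    have hn0 : nf 0 = 1 := eq_one_of_parFin_peq_ofC (hn 0) harg
    change PEq (parFin (nf 0) (β' 0)) β at hty
    change Typable Δ V (.ofC (tensFin (nf 0) fun j => .arr (τ 0 j) (β' 0 j))) at hV'
    have hW0 := hW' 0
    rw [parFin_of_eq_one hn0] at hty hW0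
    rw [tensFin_of_eq_one hn0] at hV'
    exact ⟨Δ, Θ 0, _, _, hty, ((CtxEq.refl Δ).tens fun _ => (CEq.unit _).symm).trans hctx,
      hV'.eqv (.refl _) (.ofC (.unit _)), hW0⟩
  · rintro ⟨Δ, Θ, τ, β', hβ, hctx, ⟨m, hV'⟩, ⟨m', hW'⟩⟩
    have hV'' := hV'.eqv (.refl _) (.ofC (CEq.unit _).symm)
    exact ⟨_, (Deriv.appE 1 one_pos (fun _ => 1) (fun _ => one_pos) (fun _ _ => τ)
      (fun _ _ => β') Δ (fun _ => Θ) m (fun _ => m') V W hV'' fun _ => hW').eqv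
        (((CtxEq.refl Δ).tens fun _ => CEq.unit _).trans hctx) hβ⟩

theorem typable_lam_iff {M : Tm} {ρ : CTy} :
    Typable Ctx.empty (.lam M) (.ofC ρ) ↔
      ∀ p ∈ ρ.arrows, Typable (Ctx.cons p.1 Ctx.empty) M p.2 := by
  constructor
  · intro h p hp
    obtain ⟨n, Δ, τ, β, hctx, hty, hd⟩ := h.lam_inv
    obtain ⟨_, hq, hpq⟩ :=
      Multiset.exists_mem_of_rel_of_mem hty.ceq_of_ofC.symm.rel_arrows (Multiset.mem_coe.2 hp)
    obtain ⟨i, rfl⟩ := mem_arrows_tensFin_arr.1 hq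
    exact (hd i).eqv (.cons hpq.1.symm (tensCtxFin_ctxEq_empty_iff.1 hctx i)) hpq.2.symm
  · intro h
    set L := ρ.arrows
    have hty : tensFin L.length (fun i => .arr L[i].1 L[i].2) =
        tensList (L.map fun p => .arr p.1 p.2) :=
      congrArg tensList (List.ofFn_getElem_eq_map L fun p => CTy.arr p.1 p.2)
    refine (Typable.lam (Δ := fun _ => Ctx.empty) fun i => h L[i] (List.getElem_mem _)).eqv
      (tensCtxFin_ctxEq_empty_iff.2 fun _ => .refl _) (.ofC ?_)
    rw [hty]
    exact (ρ.ceq_tensList_arrows).symm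

theorem typable_lam_congr {M : Tm} {ρ ρ' : CTy} (h : CEq ρ ρ') :
    Typable Ctx.empty (.lam M) (.ofC ρ) ↔ Typable Ctx.empty (.lam M) (.ofC ρ') :=
  ⟨fun d => d.eqv (.refl _) (.ofC h), fun d => d.eqv (.refl _) (.ofC h.symm)⟩

theorem typable_lam_arr_iff {M : Tm} {τ : CTy} {α : PTy} :
    Typable Ctx.empty (.lam M) (.ofC (.arr τ α)) ↔ Typable (Ctx.cons τ Ctx.empty) M α := by
  simp [typable_lam_iff, CTy.arrows]

theorem typable_lam_tens_iff {M : Tm} {ρ σ : CTy} :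
    Typable Ctx.empty (.lam M) (.ofC (.tens ρ σ)) ↔
      Typable Ctx.empty (.lam M) (.ofC ρ) ∧ Typable Ctx.empty (.lam M) (.ofC σ) := by
  simp only [typable_lam_iff, CTy.arrows, List.mem_append, or_imp, forall_and]

theorem typable_lam_tensFin_iff {M : Tm} {n : ℕ} {f : Fin n → CTy} :
    Typable Ctx.empty (.lam M) (.ofC (tensFin n f)) ↔
      ∀ i, Typable Ctx.empty (.lam M) (.ofC (f i)) := by
  simp only [typable_lam_iff, tensFin, arrows_tensList, List.mem_flatMap, List.mem_ofFn,
    exists_exists_eq_and]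
  exact ⟨fun h i p hp => h p ⟨i, hp⟩, fun h p ⟨i, hp⟩ => h i p hp⟩

theorem CtxEq.single {x : ℕ} {τ τ' : CTy} (h : CEq τ τ') :
    CtxEq (Ctx.single x τ) (Ctx.single x τ') := fun y => by
  unfold Ctx.single; split
  · exact h
  · exact .refl _

theorem ctxEq_tens_single (x : ℕ) (τ ρ : CTy) :
    CtxEq (Ctx.tens (Ctx.single x τ) (Ctx.single x ρ)) (Ctx.single x (.tens τ ρ)) := fun y => by
  unfold Ctx.tens Ctx.single; split
  · exact .refl _
  · exact .unit _

theorem typable_var_iff {Γ : Ctx} {x : ℕ} {τ : CTy} :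
    Typable Γ (.var x) (.ofC τ) ↔ CtxEq (Ctx.single x τ) Γ := by
  refine ⟨fun h => ?_, fun h => ⟨0, (Deriv.ax x τ).eqv h (.refl _)⟩⟩
  obtain ⟨τ', hτ', hctx⟩ := h.var_inv
  exact (CtxEq.single hτ'.ceq_of_ofC.symm).trans hctx

theorem typable_selfApp_iff {Γ : Ctx} {x : ℕ} {β : PTy} :
    Typable Γ (.app (.var x) (.var x)) β ↔
      ∃ τ β', PEq β' β ∧ CtxEq (Ctx.single x (.tens (.arr τ β') τ)) Γ := by
  simp only [typable_app_iff_of_isValue (V := .var x) (W := .var x) trivial trivial,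
    typable_var_iff]
  constructor
  · rintro ⟨Δ, Θ, τ, β', hβ, hctx, hΔ, hΘ⟩
    exact ⟨τ, β', hβ, (ctxEq_tens_single _ _ _).symm.trans ((hΔ.tens hΘ).trans hctx)⟩
  · rintro ⟨τ, β', hβ, hctx⟩
    exact ⟨_, _, τ, β', hβ, (ctxEq_tens_single _ _ _).trans hctx, .refl _, .refl _⟩

theorem typable_lam_selfApp_iff {δ : CTy} {γ : PTy} :
    Typable (Ctx.cons δ Ctx.empty) (.lam (.app (.var 1) (.var 1))) γ ↔
      ∃ (n : ℕ) (δs : Fin n → CTy) (βs : Fin n → PTy),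
        CEq δ (tensFin n fun i => .tens (.arr (δs i) (βs i)) (δs i)) ∧
        PEq (.ofC (tensFin n fun i => .arr .one (βs i))) γ := by
  constructor
  · intro h
    obtain ⟨n, Δ, τ, β, hctx, hty, hd⟩ := h.lam_inv
    choose δs βs hβ hΔ using fun i => typable_selfApp_iff.1 (hd i)
    exact ⟨n, δs, βs, (hctx 0).symm.trans (tensFin_congr fun i => (hΔ i 1).symm),
      (PEq.ofC (tensFin_congr fun i => (hΔ i 0).arrCongr (hβ i))).trans hty⟩
  · rintro ⟨n, δs, βs, hδ, hγ⟩
    refine (Typable.lam (Δ := fun i => Ctx.cons (.tens (.arr (δs i) (βs i)) (δs i)) Ctx.empty)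
      fun i => typable_selfApp_iff.2 ⟨δs i, βs i, .refl _, ?_⟩).eqv ?_ hγ
    · rintro (_ | _ | _) <;> exact .refl _
    · rintro (_ | _)
      · exact hδ.symm
      · exact tensFin_ceq_one_iff.2 fun _ => .refl _

theorem typable_ystar_iff {α : PTy} :
    Typable Ctx.empty YstarTm α ↔ ∃ δ γ, PEq γ α ∧
      Typable Ctx.empty dstarTm (.ofC (.arr δ γ)) ∧ Typable Ctx.empty dstarTm (.ofC δ) := by
  rw [YstarTm, typable_app_iff_of_isValue (V := dstarTm) (W := dstarTm) trivial trivial]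
  constructor
  · rintro ⟨Δ, Θ, δ, γ, hγ, hctx, hfun, harg⟩
    obtain ⟨hΔ, hΘ⟩ := Ctx.tens_ctxEq_empty_iff.1 hctx
    exact ⟨δ, γ, hγ, hfun.eqv hΔ (.refl _), harg.eqv hΘ (.refl _)⟩
  · rintro ⟨δ, γ, hγ, hfun, harg⟩
    exact ⟨_, _, δ, γ, hγ, Ctx.tens_ctxEq_empty_iff.2 ⟨.refl _, .refl _⟩, hfun, harg⟩

theorem ogre_interpretation (α : PTy) :
    (∃ m, Deriv Ctx.empty YstarTm α m) ↔
      ∃ (n : ℕ) (αs : Fin n → PTy),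
        PEq α (.ofC (tensFin n (fun i => .arr .one (αs i)))) ∧
        ∀ i, ∃ m, Deriv Ctx.empty YstarTm (αs i) m := by
  change Typable _ _ _ ↔ ∃ n αs, _ ∧ ∀ i, Typable _ _ _
  rw [typable_ystar_iff]
  constructor
  · rintro ⟨δ, γ, hγ, hfun, harg⟩
    obtain ⟨n, δs, βs, hδ, hβs⟩ := typable_lam_selfApp_iff.1 (typable_lam_arr_iff.1 hfun)
    have hparts := typable_lam_tensFin_iff.1 ((typable_lam_congr hδ).1 harg)
    exact ⟨n, βs, (hβs.trans hγ).symm, fun i =>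
      typable_ystar_iff.2 ⟨δs i, βs i, .refl _, typable_lam_tens_iff.1 (hparts i)⟩⟩
  · rintro ⟨n, αs, hα, hαs⟩
    choose δs βs hβ hfun harg using fun i => typable_ystar_iff.1 (hαs i)
    have hγ := (PEq.ofC (tensFin_congr fun i => (CEq.refl .one).arrCongr (hβ i))).trans hα.symm
    have hbody := typable_lam_selfApp_iff.2 ⟨n, δs, βs, .refl _, .refl _⟩
    exact ⟨_, _, hγ, typable_lam_arr_iff.2 hbody,
      typable_lam_tensFin_iff.2 fun i => typable_lam_tens_iff.2 ⟨hfun i, harg i⟩⟩
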